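/- Catalan's infinite product formula: √2 = ∏_{k=0}^{∞} ((4k+2)(4k+2))/((4k+1)(4k+3)). -/

import Mathlib

/-!
The partial products are ratios of Euler's approximants
`Γₙ(s) = n ^ s * n! / (s (s + 1) ⋯ (s + n))`: since `1/4 + 3/4 = 2 * (1/2)` the powers of `n` and
the factorials cancel in `Γₙ(1/4) Γₙ(3/4) / Γₙ(1/2)²`, leaving the Catalan product. Hence the
products tend to `Γ(1/4) Γ(3/4) / Γ(1/2)² = (π / sin (π/4)) / π = √2` by the reflection formula.
-/

open Real Filter Finset Topology

namespace Real

theorem GammaSeq_mul_GammaSeq_div_GammaSeq_sq {a b c : ℝ} (habc : a + b = 2 * c) {n : ℕ}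
    (hn : n ≠ 0) :
    GammaSeq a n * GammaSeq b n / GammaSeq c n ^ 2 =
      ∏ j ∈ range (n + 1), (c + j) ^ 2 / ((a + j) * (b + j)) := by
  have hn' : (0 : ℝ) < n := by exact_mod_cast hn.bot_lt
  have hpow : (n : ℝ) ^ a * (n : ℝ) ^ b = ((n : ℝ) ^ c) ^ 2 := by
    rw [← rpow_add hn', ← rpow_natCast, ← rpow_mul hn'.le, habc, mul_comm]; norm_num
  have hnum : (n : ℝ) ^ c * n.factorial ≠ 0 := by positivity
  rw [prod_div_distrib, prod_mul_distrib, prod_pow]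
  simp only [GammaSeq]
  rw [div_mul_div_comm, div_pow, div_div_div_eq, mul_mul_mul_comm, hpow,
    ← sq (n.factorial : ℝ), ← mul_pow, mul_comm (_ ^ 2), mul_div_mul_right _ _ (pow_ne_zero 2 hnum)]

theorem tendsto_prod_sq_div_mul_Gamma {a b c : ℝ} (habc : a + b = 2 * c)
    (hc : ∀ m : ℕ, c ≠ -m) :
    Tendsto (fun n : ℕ => ∏ j ∈ range n, (c + j) ^ 2 / ((a + j) * (b + j))) atTop
      (𝓝 (Gamma a * Gamma b / Gamma c ^ 2)) := by
  have hGamma : Tendsto (fun n => GammaSeq a n * GammaSeq b n / GammaSeq c n ^ 2) atTop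
      (𝓝 (Gamma a * Gamma b / Gamma c ^ 2)) :=
    ((GammaSeq_tendsto_Gamma a).mul (GammaSeq_tendsto_Gamma b)).div
      ((GammaSeq_tendsto_Gamma c).pow 2) (pow_ne_zero 2 (Gamma_ne_zero hc))
  rw [← tendsto_add_atTop_iff_nat 1]
  refine hGamma.congr' ?_
  filter_upwards [eventually_ne_atTop 0] with n hn
  exact GammaSeq_mul_GammaSeq_div_GammaSeq_sq habc hn

theorem Gamma_one_fourth_mul_Gamma_three_fourths : Gamma (1 / 4) * Gamma (3 / 4) = π * √2 := by
  have hreflect := Gamma_mul_Gamma_one_sub (1 / 4)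
  rw [show π * (1 / 4) = π / 4 by ring, sin_pi_div_four] at hreflect
  rw [show (3 / 4 : ℝ) = 1 - 1 / 4 by norm_num, hreflect]
  field_simp
  exact (sq_sqrt zero_le_two).symm

end Real

theorem catalan_product_sqrt_two :
    Filter.Tendsto
      (fun n : ℕ => ∏ k ∈ Finset.range n,
        (4 * (k : ℝ) + 2) ^ 2 / ((4 * k + 1) * (4 * k + 3)))
      Filter.atTop (nhds (Real.sqrt 2)) := by
  have hhalf : ∀ m : ℕ, (1 / 2 : ℝ) ≠ -m := fun m => by linarith [m.cast_nonneg (α := ℝ)]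
  have hlim := tendsto_prod_sq_div_mul_Gamma (a := 1 / 4) (b := 3 / 4) (by norm_num) hhalf
  rw [Gamma_one_fourth_mul_Gamma_three_fourths, Gamma_one_half_eq, sq_sqrt pi_pos.le,
    mul_div_cancel_left₀ _ pi_ne_zero] at hlim
  refine hlim.congr fun n => prod_congr rfl fun k _ => ?_
  have hk1 : (0 : ℝ) < 1 / 4 + k := by positivity
  have hk3 : (0 : ℝ) < 3 / 4 + k := by positivity
  field_simp
  ring
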